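/- arXiv:1504.02925 — 3 statements merged into one kernel-verified Lean document; each statement's English description precedes it below -/
import Mathlib

section
/- A nonzero Artinian module A over a commutative Noetherian local ring (R, m) has finite length if and only if Att_R A ⊆ {m}. -/
/-- A module `M` over `R` is *secondary* if it is nonzero and every `x : R` acts on `M`
either surjectively or nilpotently. -/
def IsSecondary (R : Type*) [CommRing R] (M : Type*) [AddCommGroup M] [Module R M] : Prop :=
  Nontrivial M ∧
    ∀ x : R, Function.Surjective (fun m : M => x • m) ∨ ∃ n : ℕ, ∀ m : M, x ^ n • m = 0

section
variable {R : Type*} [CommRing R] {A : Type*} [AddCommGroup A] [Module R A]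

lemma surj_smul_iff (x : R) (Q : Submodule R A) :
    Function.Surjective (fun m : Q => x • m) ↔ ∀ a ∈ Q, ∃ b ∈ Q, x • b = a := by
  constructor
  · intro h a ha
    obtain ⟨b, hb⟩ := h ⟨a, ha⟩
    exact ⟨b, b.2, congrArg Subtype.val hb⟩
  · intro h a
    obtain ⟨b, hb, hba⟩ := h a a.2
    exact ⟨⟨b, hb⟩, Subtype.ext hba⟩

lemma nilp_smul_iff (x : R) (Q : Submodule R A) :
    (∃ n : ℕ, ∀ m : Q, x ^ n • m = 0) ↔ x ∈ (Module.annihilator R Q).radical := by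
  simp only [Ideal.mem_radical_iff, Module.mem_annihilator]

/-- A submodule is sum-irreducible if it is nonzero and not a sum of two proper submodules. -/
def SumIrred (Q : Submodule R A) : Prop :=
  Q ≠ ⊥ ∧ ∀ B C : Submodule R A, B ⊔ C = Q → B = Q ∨ C = Q

lemma exists_finset_sumIrred [IsArtinian R A] (Q : Submodule R A) :
    ∃ s : Finset (Submodule R A), (∀ B ∈ s, SumIrred B) ∧ s.sup id = Q := by
  induction Q using WellFoundedLT.induction with
  | ind Q ih =>
    by_cases hbot : Q = ⊥
    · exact ⟨∅, by simp, by simp [hbot]⟩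
    by_cases hirr : SumIrred Q
    · exact ⟨{Q}, by simpa using hirr, by simp⟩
    · simp only [SumIrred, not_and, not_forall] at hirr
      obtain ⟨B, C, hBC, hB⟩ := hirr hbot
      push_neg at hB
      obtain ⟨hB, hC⟩ := hB
      have hBle : B < Q := lt_of_le_of_ne (hBC ▸ le_sup_left) hB
      have hCle : C < Q := lt_of_le_of_ne (hBC ▸ le_sup_right) hC
      classical
      obtain ⟨s, hs, hsup⟩ := ih B hBle
      obtain ⟨t, ht, htup⟩ := ih C hCle
      refine ⟨s ∪ t, ?_, ?_⟩
      · intro D hD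
        rcases Finset.mem_union.mp hD with h | h
        exacts [hs D h, ht D h]
      · rw [Finset.sup_union, hsup, htup, hBC]

lemma secondary_of_sumIrred [IsArtinian R A] {Q : Submodule R A} (hQ : SumIrred Q) :
    IsSecondary R Q := by
  refine ⟨(Submodule.nontrivial_iff_ne_bot).mpr hQ.1, ?_⟩
  intro x
  -- the descending chain of images of powers of x
  set f : ℕ →o (Submodule R A)ᵒᵈ :=
    ⟨fun n => Q.map (x ^ n • (LinearMap.id : A →ₗ[R] A)), by
      intro a b hab
      simp only
      intro y hy
      obtain ⟨m, hm, rfl⟩ := Submodule.mem_map.mp hy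
      obtain ⟨c, rfl⟩ := Nat.exists_eq_add_of_le hab
      refine Submodule.mem_map.mpr ⟨x ^ c • m, Q.smul_mem _ hm, ?_⟩
      show x ^ a • (x ^ c • m) = x ^ (a + c) • m
      rw [← mul_smul, ← pow_add]⟩ with hf
  obtain ⟨N, hN⟩ := IsArtinian.monotone_stabilizes f
  set n : ℕ := N + 1 with hn
  have hstab : f n = f (n + n) := by
    rw [← hN n (by omega), ← hN (n+n) (by omega)]
  set B : Submodule R A := Q.map (x ^ n • (LinearMap.id : A →ₗ[R] A)) with hB
  set K : Submodule R A := Q ⊓ LinearMap.ker (x ^ n • (LinearMap.id : A →ₗ[R] A)) with hK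
  have hsup : B ⊔ K = Q := by
    apply le_antisymm
    · refine sup_le ?_ inf_le_left
      rintro y ⟨m, hm, rfl⟩
      exact Q.smul_mem _ hm
    · intro a ha
      have hstab2 : Q.map (x ^ n • (LinearMap.id : A →ₗ[R] A))
          = Q.map (x ^ (n+n) • (LinearMap.id : A →ₗ[R] A)) := congrArg OrderDual.ofDual hstab
      have h1 : x ^ n • a ∈ Q.map (x ^ (n+n) • (LinearMap.id : A →ₗ[R] A)) := by
        rw [← hstab2]
        exact ⟨a, ha, rfl⟩
      obtain ⟨b, hb, hba⟩ := h1
      have hba' : x ^ (n + n) • b = x ^ n • a := hba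
      have ha1 : x ^ n • b ∈ B := ⟨b, hb, rfl⟩
      have ha2 : a - x ^ n • b ∈ K := by
        refine ⟨Q.sub_mem ha (Q.smul_mem _ hb), ?_⟩
        have : x ^ n • (a - x ^ n • b) = 0 := by
          rw [smul_sub, ← mul_smul, ← pow_add, hba', sub_self]
        simpa [LinearMap.mem_ker] using this
      have : a = x ^ n • b + (a - x ^ n • b) := by abel
      rw [this]
      exact Submodule.add_mem_sup ha1 ha2
  rcases hQ.2 B K hsup with hBQ | hKQ
  · left
    rw [surj_smul_iff]
    intro a ha
    rw [← hBQ] at ha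
    obtain ⟨m, hm, rfl⟩ := ha
    refine ⟨x ^ N • m, Q.smul_mem _ hm, ?_⟩
    show x • x ^ N • m = (x ^ n • LinearMap.id) m
    simp only [LinearMap.smul_apply, LinearMap.id_apply, ← mul_smul, hn, pow_succ]
    ring_nf
  · right
    refine ⟨n, fun m => ?_⟩
    have hm : (m : A) ∈ K := by rw [hKQ]; exact m.2
    have : x ^ n • (m : A) = 0 := by
      have := hm.2
      simpa [LinearMap.mem_ker] using this
    exact Subtype.ext this
end

section
variable {R : Type*} [CommRing R] {A : Type*} [AddCommGroup A] [Module R A]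

lemma mem_ann_iff (x : R) (Q : Submodule R A) :
    x ∈ Module.annihilator R Q ↔ ∀ a ∈ Q, x • a = 0 := by
  rw [Module.mem_annihilator]
  constructor
  · intro h a ha
    have := congrArg Subtype.val (h ⟨a, ha⟩)
    simpa using this
  · intro h m
    exact Subtype.ext (h m.1 m.2)

lemma surj_pow {M : Type*} [AddCommGroup M] [Module R M] {z : R}
    (h : Function.Surjective (fun m : M => z • m)) (k : ℕ) :
    Function.Surjective (fun m : M => z ^ k • m) := by
  induction k with
  | zero => exact fun a => ⟨a, by simp⟩
  | succ k ih =>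
    intro a
    obtain ⟨b, hb⟩ := h a
    obtain ⟨c, hc⟩ := ih b
    refine ⟨c, ?_⟩
    simp only at hb hc ⊢
    rw [pow_succ', mul_smul, hc, hb]

lemma radical_isPrime_of_secondary {Q : Submodule R A} (hQ : IsSecondary R Q) :
    (Module.annihilator R Q).radical.IsPrime := by
  have hnt : Nontrivial Q := hQ.1
  constructor
  · intro h
    have h1 : (1 : R) ∈ (Module.annihilator R Q).radical := h ▸ Submodule.mem_top
    obtain ⟨n, hn⟩ := Ideal.mem_radical_iff.mp h1
    rw [one_pow, Module.mem_annihilator] at hn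
    obtain ⟨q, hq⟩ := exists_ne (0 : Q)
    exact hq (by simpa using hn q)
  · intro x y hxy
    by_contra h
    push_neg at h
    obtain ⟨hx, hy⟩ := h
    have hxs : Function.Surjective (fun m : Q => x • m) := by
      rcases hQ.2 x with h' | h'
      · exact h'
      · exact absurd ((nilp_smul_iff x Q).mp h') hx
    have hys : Function.Surjective (fun m : Q => y • m) := by
      rcases hQ.2 y with h' | h'
      · exact h'
      · exact absurd ((nilp_smul_iff y Q).mp h') hy
    have hzs : Function.Surjective (fun m : Q => (x * y) • m) := by
      intro a
      obtain ⟨b, hb⟩ := hxs a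
      obtain ⟨c, hc⟩ := hys b
      exact ⟨c, by simp only at hb hc ⊢; rw [mul_smul, hc, hb]⟩
    obtain ⟨n, hn⟩ := Ideal.mem_radical_iff.mp hxy
    obtain ⟨q, hq⟩ := exists_ne (0 : Q)
    obtain ⟨b, hb⟩ := surj_pow hzs n q
    apply hq
    rw [← hb]
    simpa using Module.mem_annihilator.mp hn b

lemma isSecondary_sup {Q₁ Q₂ : Submodule R A} (h1 : IsSecondary R Q₁) (h2 : IsSecondary R Q₂)
    (heq : (Module.annihilator R Q₂).radical = (Module.annihilator R Q₁).radical) :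
    IsSecondary R ↥(Q₁ ⊔ Q₂) ∧
      (Module.annihilator R ↥(Q₁ ⊔ Q₂)).radical = (Module.annihilator R Q₁).radical := by
  have hnt1 : Nontrivial Q₁ := h1.1
  have hle : (Module.annihilator R ↥(Q₁ ⊔ Q₂)).radical ≤ (Module.annihilator R Q₁).radical := by
    apply Ideal.radical_mono
    intro x hx
    rw [mem_ann_iff] at hx ⊢
    exact fun a ha => hx a (le_sup_left (a := Q₁) ha)
  have hge : (Module.annihilator R Q₁).radical ≤ (Module.annihilator R ↥(Q₁ ⊔ Q₂)).radical := by
    intro x hx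
    have hx2 : x ∈ (Module.annihilator R Q₂).radical := heq ▸ hx
    obtain ⟨n₁, hn₁⟩ := Ideal.mem_radical_iff.mp hx
    obtain ⟨n₂, hn₂⟩ := Ideal.mem_radical_iff.mp hx2
    rw [mem_ann_iff] at hn₁ hn₂
    refine Ideal.mem_radical_iff.mpr ⟨n₁ + n₂, (mem_ann_iff _ _).mpr ?_⟩
    intro a ha
    obtain ⟨a₁, ha₁, a₂, ha₂, rfl⟩ := Submodule.mem_sup.mp ha
    rw [smul_add]
    have e1 : x ^ (n₁ + n₂) • a₁ = 0 := by
      rw [add_comm, pow_add, mul_smul, hn₁ a₁ ha₁, smul_zero]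
    have e2 : x ^ (n₁ + n₂) • a₂ = 0 := by
      rw [pow_add, mul_smul, hn₂ a₂ ha₂, smul_zero]
    rw [e1, e2, add_zero]
  constructor
  · refine ⟨?_, ?_⟩
    · rw [Submodule.nontrivial_iff_ne_bot] at hnt1 ⊢
      intro h
      exact hnt1 (le_bot_iff.mp (h ▸ le_sup_left))
    · intro x
      by_cases hx : x ∈ (Module.annihilator R Q₁).radical
      · exact Or.inr ((nilp_smul_iff x _).mpr (hge hx))
      · left
        have hs1 : Function.Surjective (fun m : Q₁ => x • m) := by
          rcases h1.2 x with h' | h'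
          · exact h'
          · exact absurd ((nilp_smul_iff x Q₁).mp h') hx
        have hs2 : Function.Surjective (fun m : Q₂ => x • m) := by
          rcases h2.2 x with h' | h'
          · exact h'
          · exact absurd (heq ▸ (nilp_smul_iff x Q₂).mp h') hx
        rw [surj_smul_iff] at hs1 hs2 ⊢
        intro a ha
        obtain ⟨a₁, ha₁, a₂, ha₂, rfl⟩ := Submodule.mem_sup.mp ha
        obtain ⟨b₁, hb₁, hb₁'⟩ := hs1 a₁ ha₁
        obtain ⟨b₂, hb₂, hb₂'⟩ := hs2 a₂ ha₂
        refine ⟨b₁ + b₂, Submodule.add_mem_sup hb₁ hb₂, ?_⟩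
        rw [smul_add, hb₁', hb₂']
  · exact le_antisymm hle hge

lemma isSecondary_finsetSup {q : Ideal R} {s : Finset (Submodule R A)} (hne : s.Nonempty)
    (h : ∀ Q ∈ s, IsSecondary R Q ∧ (Module.annihilator R Q).radical = q) :
    IsSecondary R ↥(s.sup id) ∧ (Module.annihilator R ↥(s.sup id)).radical = q := by
  induction hne using Finset.Nonempty.cons_induction with
  | singleton a =>
    rw [Finset.sup_singleton]
    exact h a (by simp)
  | cons a s ha hs ih =>
    have hmem : ∀ Q ∈ s, IsSecondary R Q ∧ (Module.annihilator R Q).radical = q :=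
      fun Q hQ => h Q (Finset.mem_cons_of_mem hQ)
    obtain ⟨ih1, ih2⟩ := ih hmem
    have ha' := h a (Finset.mem_cons_self a s)
    rw [Finset.sup_cons]
    have := isSecondary_sup ha'.1 ih1 (ih2.trans ha'.2.symm)
    exact ⟨this.1, this.2.trans ha'.2⟩
end

/-- A minimal secondary representation of the module `M`:
a finite family of secondary submodules summing to `M`, irredundant,
with pairwise distinct attached primes. -/
structure MinimalSecondaryRep (R : Type*) [CommRing R] (M : Type*) [AddCommGroup M]
    [Module R M] where
  n : ℕ
  comp : Fin n → Submodule R M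
  p : Fin n → Ideal R
  sum_eq : (⨆ i, comp i) = ⊤
  secondary : ∀ i, IsSecondary R (comp i)
  rad_eq : ∀ i, (Module.annihilator R (comp i)).radical = p i
  isPrime : ∀ i, (p i).IsPrime
  irredundant : ∀ i, (⨆ j ∈ ({i}ᶜ : Set (Fin n)), comp j) ≠ ⊤
  inj : Function.Injective p

/-- The set of attached primes of `M`: the primes occurring in a minimal
secondary representation of `M` (this set does not depend on the representation). -/
def attachedPrimes (R : Type*) [CommRing R] (M : Type*) [AddCommGroup M] [Module R M] :
    Set (Ideal R) :=
  { q | ∃ rep : MinimalSecondaryRep R M, ∃ i, rep.p i = q }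

section
variable {R : Type*} [CommRing R] {A : Type*} [AddCommGroup A] [Module R A]

lemma rep_of_family (T : Finset (Ideal R)) (C : Ideal R → Submodule R A)
    (hsec : ∀ q ∈ T, IsSecondary R (C q))
    (hrad : ∀ q ∈ T, (Module.annihilator R (C q)).radical = q)
    (hsum : (⨆ q ∈ T, C q) = ⊤) : Nonempty (MinimalSecondaryRep R A) := by
  classical
  induction T using Finset.strongInductionOn with
  | _ T ih =>
  by_cases hred : ∃ q ∈ T, (⨆ r ∈ T.erase q, C r) = ⊤
  · obtain ⟨q, hq, htop⟩ := hred
    exact ih (T.erase q) (Finset.erase_ssubset hq)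
      (fun r hr => hsec r (Finset.mem_of_mem_erase hr))
      (fun r hr => hrad r (Finset.mem_of_mem_erase hr)) htop
  · push_neg at hred
    have e : Fin T.card ≃ ↥T := (Fintype.equivFinOfCardEq (Fintype.card_coe T)).symm
    refine ⟨⟨T.card, fun i => C (e i), fun i => (e i : Ideal R), ?_, ?_, ?_, ?_, ?_, ?_⟩⟩
    · rw [← hsum]
      apply le_antisymm
      · exact iSup_le fun i => le_iSup₂ (f := fun q (_ : q ∈ T) => C q) (e i : Ideal R) (e i).2
      · refine iSup₂_le fun q hq => ?_
        have : C q = C (e (e.symm ⟨q, hq⟩)) := by rw [e.apply_symm_apply]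
        rw [this]
        exact le_iSup (fun i => C (e i)) (e.symm ⟨q, hq⟩)
    · exact fun i => hsec _ (e i).2
    · exact fun i => hrad _ (e i).2
    · intro i
      have := radical_isPrime_of_secondary (hsec _ (e i).2)
      rwa [hrad _ (e i).2] at this
    · intro i htop
      apply hred (e i : Ideal R) (e i).2
      apply le_antisymm le_top
      rw [← htop]
      refine iSup₂_le fun j hj => ?_
      have hne : (e j : Ideal R) ≠ (e i : Ideal R) :=
        fun h => (by simpa using hj : j ≠ i) (e.injective (Subtype.ext h))
      exact le_iSup₂ (f := fun r (_ : r ∈ T.erase (e i : Ideal R)) => C r) (e j : Ideal R)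
        (Finset.mem_erase.mpr ⟨hne, (e j).2⟩)
    · intro i j hij
      exact e.injective (Subtype.ext hij)

theorem exists_minimalSecondaryRep [IsArtinian R A] :
    Nonempty (MinimalSecondaryRep R A) := by
  classical
  obtain ⟨s, hs, hsup⟩ := exists_finset_sumIrred (⊤ : Submodule R A)
  set T : Finset (Ideal R) := s.image (fun Q => (Module.annihilator R ↥Q).radical) with hT
  set C : Ideal R → Submodule R A :=
    fun q => (s.filter (fun Q => (Module.annihilator R ↥Q).radical = q)).sup id with hC
  have key : ∀ q ∈ T, IsSecondary R ↥(C q) ∧ (Module.annihilator R ↥(C q)).radical = q := by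
    intro q hq
    obtain ⟨Q, hQ, hQq⟩ := Finset.mem_image.mp hq
    refine isSecondary_finsetSup ⟨Q, Finset.mem_filter.mpr ⟨hQ, hQq⟩⟩ ?_
    intro P hP
    obtain ⟨hPs, hPq⟩ := Finset.mem_filter.mp hP
    exact ⟨secondary_of_sumIrred (hs P hPs), hPq⟩
  apply rep_of_family T C (fun q hq => (key q hq).1) (fun q hq => (key q hq).2)
  apply le_antisymm le_top
  rw [← hsup]
  refine Finset.sup_le fun Q hQ => ?_
  refine le_trans ?_ (le_iSup₂ (f := fun q (_ : q ∈ T) => C q)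
    ((Module.annihilator R ↥Q).radical) (Finset.mem_image_of_mem _ hQ))
  exact Finset.le_sup (f := id) (Finset.mem_filter.mpr ⟨hQ, rfl⟩)
end

section
variable {R : Type*} [CommRing R] [IsLocalRing R]

open IsLocalRing

lemma finite_of_max_ann {M : Type*} [AddCommGroup M] [Module R M] [IsArtinian R M]
    (h : maximalIdeal R ≤ Module.annihilator R M) : Module.Finite R M := by
  have hss : IsSemisimpleModule R M := by
    apply IsSemisimpleModule.of_sSup_simples_eq_top
    apply le_antisymm le_top
    intro a _
    by_cases ha : a = 0
    · simp [ha]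
    have hkill : ∀ r ∈ maximalIdeal R, ∀ m : M, r • m = 0 :=
      fun r hr m => Module.mem_annihilator.mp (h hr) m
    have hatom : IsAtom (Submodule.span R {a}) := by
      constructor
      · simpa [Submodule.span_singleton_eq_bot] using ha
      · intro b hb
        by_contra hbne
        obtain ⟨c, hc, hcne⟩ := Submodule.exists_mem_ne_zero_of_ne_bot hbne
        obtain ⟨r, rfl⟩ := Submodule.mem_span_singleton.mp (hb.le hc)
        have hru : IsUnit r := by
          rw [← notMem_maximalIdeal]
          intro hr
          exact hcne (hkill r hr a)
        obtain ⟨u, rfl⟩ := hru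
        have : a ∈ b := by
          have := b.smul_mem ((u⁻¹ : Rˣ) : R) hc
          rwa [← mul_smul, Units.inv_mul, one_smul] at this
        exact hb.ne (le_antisymm hb.le
          ((Submodule.span_singleton_le_iff_mem a b).mpr this))
    have hmem : Submodule.span R {a} ∈ {m : Submodule R M | IsSimpleModule R m} :=
      isSimpleModule_iff_isAtom.mpr hatom
    exact le_sSup hmem (Submodule.mem_span_singleton_self a)
  exact (IsSemisimpleModule.finite_tfae.out 2 0).mp ‹_›

lemma finite_of_pow_ann (k : ℕ) :
    ∀ {M : Type} [AddCommGroup M] [Module R M] [IsArtinian R M],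
      (maximalIdeal R) ^ k ≤ Module.annihilator R M → Module.Finite R M := by
  induction k with
  | zero =>
    intro M _ _ _ h
    have h1 : (1 : R) ∈ Module.annihilator R M := h (by simp)
    have hs : Subsingleton M := by
      refine subsingleton_of_forall_eq 0 fun m => ?_
      have := Module.mem_annihilator.mp h1 m
      simpa using this
    exact ⟨⟨∅, Subsingleton.elim _ _⟩⟩
  | succ k ih =>
    intro M _ _ _ h
    set S : Submodule R M := maximalIdeal R • ⊤ with hSdef
    have hS : (maximalIdeal R) ^ k ≤ Module.annihilator R ↥S := by
      intro x hx
      rw [mem_ann_iff]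
      intro a ha
      refine Submodule.smul_induction_on ha ?_ ?_
      · intro r hr n _
        rw [smul_smul]
        have hxr : x * r ∈ Module.annihilator R M := by
          apply h
          rw [pow_succ]
          exact Ideal.mul_mem_mul hx hr
        exact Module.mem_annihilator.mp hxr n
      · intro y z hy hz
        rw [smul_add, hy, hz, add_zero]
    have fS : Module.Finite R ↥S := ih hS
    have hQ : maximalIdeal R ≤ Module.annihilator R (M ⧸ S) := by
      intro r hr
      rw [Module.mem_annihilator]
      intro m
      obtain ⟨n, rfl⟩ := Submodule.Quotient.mk_surjective S m
      rw [← Submodule.Quotient.mk_smul, Submodule.Quotient.mk_eq_zero]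
      exact Submodule.smul_mem_smul hr Submodule.mem_top
    have fQ : Module.Finite R (M ⧸ S) := finite_of_max_ann hQ
    rw [Module.finite_def]
    apply Submodule.fg_of_fg_map_of_fg_inf_ker S.mkQ
    · rw [Submodule.map_top, Submodule.range_mkQ]
      exact Module.finite_def.mp fQ
    · rw [top_inf_eq, Submodule.ker_mkQ]
      exact Module.Finite.iff_fg.mp fS

lemma noeth_of_pow_ann {M : Type} [AddCommGroup M] [Module R M] [IsArtinian R M]
    (k : ℕ) (h : (maximalIdeal R) ^ k ≤ Module.annihilator R M) : IsNoetherian R M := by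
  rw [isNoetherian_def]
  intro N
  have hle : (maximalIdeal R) ^ k ≤ Module.annihilator R ↥N := by
    refine le_trans h fun x hx => ?_
    rw [mem_ann_iff]
    exact fun a _ => Module.mem_annihilator.mp hx a
  exact Module.Finite.iff_fg.mp (finite_of_pow_ann k hle)
end

/-- A nonzero Artinian module over a commutative Noetherian local ring  has finite
length iff its attached primes are contained in . -/
theorem isFiniteLength_iff_attachedPrimes_subset
    (R : Type) [CommRing R] [IsNoetherianRing R] [IsLocalRing R]
    (A : Type) [AddCommGroup A] [Module R A] [IsArtinian R A] [Nontrivial A] :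
    IsFiniteLength R A ↔ attachedPrimes R A ⊆ {IsLocalRing.maximalIdeal R} := by
  constructor
  · intro hfl
    have hNoeth : IsNoetherian R A := (isFiniteLength_iff_isNoetherian_isArtinian.mp hfl).1
    rintro q ⟨rep, i, rfl⟩
    have hsec := rep.secondary i
    have hrad := rep.rad_eq i
    have hprime := rep.isPrime i
    have hnt : Nontrivial (rep.comp i) := hsec.1
    rw [Set.mem_singleton_iff]
    refine le_antisymm (IsLocalRing.le_maximalIdeal hprime.ne_top) ?_
    intro x hx
    rcases hsec.2 x with hsurj | hnilp
    · exfalso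
      have hfg : (⊤ : Submodule R (rep.comp i)).FG := IsNoetherian.noetherian ⊤
      have hle : (⊤ : Submodule R (rep.comp i)) ≤ IsLocalRing.maximalIdeal R • ⊤ := by
        intro a _
        obtain ⟨b, hb⟩ := hsurj a
        rw [← hb]
        exact Submodule.smul_mem_smul hx Submodule.mem_top
      have := Submodule.eq_bot_of_le_smul_of_le_jacobson_bot (IsLocalRing.maximalIdeal R) ⊤ hfg
        hle (IsLocalRing.maximalIdeal_le_jacobson ⊥)
      obtain ⟨a, ha⟩ := exists_ne (0 : rep.comp i)
      apply ha
      have hmem : a ∈ (⊤ : Submodule R (rep.comp i)) := Submodule.mem_top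
      rw [this] at hmem
      simpa using hmem
    · rw [← hrad]
      exact (nilp_smul_iff x (rep.comp i)).mp hnilp
  · intro hsub
    rw [isFiniteLength_iff_isNoetherian_isArtinian]
    refine ⟨?_, inferInstance⟩
    obtain ⟨rep⟩ := exists_minimalSecondaryRep (R := R) (A := A)
    have hcomp : ∀ i, IsNoetherian R (rep.comp i) := by
      intro i
      have hm : rep.p i = IsLocalRing.maximalIdeal R := hsub ⟨rep, i, rfl⟩
      have hle : IsLocalRing.maximalIdeal R ≤ (Module.annihilator R (rep.comp i)).radical := by
        rw [rep.rad_eq i, hm]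
      obtain ⟨k, hk⟩ := Ideal.exists_pow_le_of_le_radical_of_fg hle
        (IsNoetherian.noetherian _)
      exact noeth_of_pow_ann k hk
    have : IsNoetherian R ↥(⨆ i, rep.comp i) := isNoetherian_iSup
    rw [rep.sum_eq] at this
    rwa [isNoetherian_top_iff] at this
end

section
/- For an Artinian module A over a commutative Noetherian local ring R, the minimal elements of Att_R A coincide with the minimal primes over Ann_R A. In particular, dim(R/Ann_R A) = max{ dim(R/p) : p ∈ Att_R A }. -/
section Aux
variable {R : Type*} [CommRing R] {A : Type*} [AddCommGroup A] [Module R A]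

/-- Submodule-level secondary predicate. -/
def Sec (N : Submodule R A) : Prop :=
  N ≠ ⊥ ∧ ∀ x : R, (∀ m ∈ N, ∃ m' ∈ N, x • m' = m) ∨ ∃ k : ℕ, ∀ m ∈ N, x ^ k • m = 0

lemma sec_iff (N : Submodule R A) : IsSecondary R ↥N ↔ Sec N := by
  unfold IsSecondary Sec
  rw [Submodule.nontrivial_iff_ne_bot]
  refine and_congr Iff.rfl (forall_congr' fun x => or_congr ?_ ?_)
  · constructor
    · intro h m hm
      obtain ⟨m', hm'⟩ := h ⟨m, hm⟩
      exact ⟨m', m'.2, congrArg Subtype.val hm'⟩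
    · intro h m
      obtain ⟨m', hm', he⟩ := h m m.2
      exact ⟨⟨m', hm'⟩, Subtype.ext he⟩
  · refine exists_congr fun k => ?_
    constructor
    · intro h m hm; exact congrArg Subtype.val (h ⟨m, hm⟩)
    · intro h m; exact Subtype.ext (h m m.2)

lemma mem_rad_iff (N : Submodule R A) (x : R) :
    x ∈ N.annihilator.radical ↔ ∃ k : ℕ, ∀ m ∈ N, x ^ k • m = 0 := by
  rw [Ideal.mem_radical_iff]
  exact exists_congr fun k => Submodule.mem_annihilator

lemma pow_surj {N : Submodule R A} {x : R} (h : ∀ m ∈ N, ∃ m' ∈ N, x • m' = m) :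
    ∀ k : ℕ, ∀ m ∈ N, ∃ m' ∈ N, x ^ k • m' = m := by
  intro k
  induction k with
  | zero => intro m hm; exact ⟨m, hm, by simp⟩
  | succ k ih =>
    intro m hm
    obtain ⟨m1, hm1, he1⟩ := ih m hm
    obtain ⟨m2, hm2, he2⟩ := h m1 hm1
    exact ⟨m2, hm2, by rw [pow_succ, mul_smul, he2, he1]⟩

lemma sec_radical_isPrime {N : Submodule R A} (h : Sec N) :
    N.annihilator.radical.IsPrime := by
  constructor
  · rw [Ideal.ne_top_iff_one, mem_rad_iff]
    rintro ⟨k, hk⟩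
    obtain ⟨m, hm, hm0⟩ := Submodule.ne_bot_iff N |>.mp h.1
    exact hm0 (by simpa using hk m hm)
  · intro x y hxy
    by_cases hx : x ∈ N.annihilator.radical
    · exact Or.inl hx
    · right
      rcases h.2 x with hs | hn
      · rw [mem_rad_iff] at hxy ⊢
        obtain ⟨k, hk⟩ := hxy
        refine ⟨k, fun m hm => ?_⟩
        obtain ⟨m', hm', he⟩ := pow_surj hs k m hm
        rw [← he, ← mul_smul, ← mul_pow, mul_comm y x, hk m' hm']
      · exact absurd ((mem_rad_iff N x).mpr hn) hx

lemma sec_sup {N1 N2 : Submodule R A} (h1 : Sec N1) (h2 : Sec N2)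
    (he : N2.annihilator.radical = N1.annihilator.radical) :
    Sec (N1 ⊔ N2) ∧ (N1 ⊔ N2).annihilator.radical = N1.annihilator.radical := by
  have key : ∀ x : R, x ∈ N1.annihilator.radical →
      ∃ k : ℕ, ∀ m ∈ N1 ⊔ N2, x ^ k • m = 0 := by
    intro x hx
    obtain ⟨k1, hk1⟩ := (mem_rad_iff N1 x).mp hx
    obtain ⟨k2, hk2⟩ := (mem_rad_iff N2 x).mp (he ▸ hx)
    refine ⟨k1 + k2, fun m hm => ?_⟩
    obtain ⟨a, ha, b, hb, rfl⟩ := Submodule.mem_sup.mp hm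
    have h1' : x ^ (k1 + k2) • a = 0 := by
      rw [add_comm k1 k2, pow_add, mul_smul, hk1 a ha, smul_zero]
    have h2' : x ^ (k1 + k2) • b = 0 := by
      rw [pow_add, mul_smul, hk2 b hb, smul_zero]
    rw [smul_add, h1', h2', add_zero]
  constructor
  · refine ⟨fun hb => h1.1 (le_bot_iff.mp (hb ▸ le_sup_left)), fun x => ?_⟩
    by_cases hx : x ∈ N1.annihilator.radical
    · exact Or.inr (key x hx)
    · left
      have hs1 : ∀ m ∈ N1, ∃ m' ∈ N1, x • m' = m := by
        rcases h1.2 x with hs | hn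
        · exact hs
        · exact absurd ((mem_rad_iff N1 x).mpr hn) hx
      have hs2 : ∀ m ∈ N2, ∃ m' ∈ N2, x • m' = m := by
        rcases h2.2 x with hs | hn
        · exact hs
        · exact absurd (he ▸ (mem_rad_iff N2 x).mpr hn) hx
      intro m hm
      obtain ⟨a, ha, b, hb, rfl⟩ := Submodule.mem_sup.mp hm
      obtain ⟨a', ha', hea⟩ := hs1 a ha
      obtain ⟨b', hb', heb⟩ := hs2 b hb
      exact ⟨a' + b', Submodule.mem_sup.mpr ⟨a', ha', b', hb', rfl⟩,
        by rw [smul_add, hea, heb]⟩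
  · apply le_antisymm
    · intro x hx
      rw [mem_rad_iff] at hx ⊢
      obtain ⟨k, hk⟩ := hx
      exact ⟨k, fun m hm => hk m (le_sup_left (a := N1) (b := N2) hm)⟩
    · intro x hx
      rw [mem_rad_iff]
      exact key x hx

end Aux
section Aux2
variable {R : Type*} [CommRing R] {A : Type*} [AddCommGroup A] [Module R A]

/-- Sum-irreducibility of a submodule. -/
def SumIrr (N : Submodule R A) : Prop :=
  N ≠ ⊥ ∧ ∀ N1 N2 : Submodule R A, N1 ≤ N → N2 ≤ N → N1 ⊔ N2 = N → N1 = N ∨ N2 = N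

lemma exists_irr_decomp [IsArtinian R A] (N : Submodule R A) :
    ∃ s : Finset (Submodule R A), (∀ S ∈ s, SumIrr S) ∧ s.sup id = N := by
  classical
  induction N using WellFoundedLT.induction with
  | ind N ih =>
    by_cases hbot : N = ⊥
    · exact ⟨∅, by simp, by simp [hbot]⟩
    by_cases hirr : SumIrr N
    · exact ⟨{N}, by simpa using hirr, by simp⟩
    · rw [SumIrr, not_and] at hirr
      push_neg at hirr
      obtain ⟨N1, N2, hle1, hle2, hsup, hne1, hne2⟩ := hirr hbot
      obtain ⟨s1, hs1, hsup1⟩ := ih N1 (lt_of_le_of_ne hle1 hne1)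
      obtain ⟨s2, hs2, hsup2⟩ := ih N2 (lt_of_le_of_ne hle2 hne2)
      refine ⟨s1 ∪ s2, fun S hS => ?_, ?_⟩
      · rcases Finset.mem_union.mp hS with h | h
        · exact hs1 S h
        · exact hs2 S h
      · rw [Finset.sup_union, hsup1, hsup2, hsup]

lemma sumIrr_sec [IsArtinian R A] {N : Submodule R A} (h : SumIrr N) : Sec N := by
  refine ⟨h.1, fun x => ?_⟩
  set f : ℕ → Submodule R A := fun k => N.map (LinearMap.lsmul R A (x ^ k)) with hf
  have hfle : ∀ k, f k ≤ N := by
    rintro k _ ⟨m, hm, rfl⟩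
    exact N.smul_mem _ hm
  have hmono : ∀ k l, k ≤ l → f l ≤ f k := by
    have step : ∀ k, f (k + 1) ≤ f k := by
      rintro k _ ⟨m, hm, rfl⟩
      exact ⟨x • m, N.smul_mem _ hm, by
        simp only [LinearMap.lsmul_apply, ← mul_smul, ← pow_succ]⟩
    intro k l hkl
    induction l with
    | zero => simpa [Nat.le_zero.mp hkl]
    | succ l ihl =>
      rcases Nat.lt_or_ge k (l + 1) with hlt | hge
      · exact le_trans (step l) (ihl (Nat.lt_succ_iff.mp hlt))
      · have : k = l + 1 := le_antisymm hkl hge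
        simp [this]
  obtain ⟨n0, hn0⟩ := IsArtinian.monotone_stabilizes (R := R) (M := A)
    ⟨fun k => OrderDual.toDual (f k), fun k l hkl => hmono k l hkl⟩
  set n := n0 + 1 with hn
  have hstab : f n = f (2 * n) := by
    have h1 := hn0 n (by omega)
    have h2 := hn0 (2 * n) (by omega)
    exact (OrderDual.toDual_inj.mp (h1.symm.trans h2))
  have hfit : N = (N ⊓ LinearMap.ker (LinearMap.lsmul R A (x ^ n))) ⊔ f n := by
    apply le_antisymm
    · intro m hm
      have : x ^ n • m ∈ f (2 * n) := hstab ▸ ⟨m, hm, rfl⟩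
      obtain ⟨s, hs, hes⟩ := this
      simp only [LinearMap.lsmul_apply] at hes
      have hdecomp : m = (m - x ^ n • s) + x ^ n • s := by abel
      rw [hdecomp]
      refine Submodule.add_mem_sup (Submodule.mem_inf.mpr
        ⟨N.sub_mem hm (N.smul_mem _ hs), LinearMap.mem_ker.mpr ?_⟩) ⟨s, hs, rfl⟩
      rw [LinearMap.lsmul_apply, smul_sub, ← hes,
        ← mul_smul, ← pow_add, two_mul, sub_self]
    · exact sup_le inf_le_left (hfle n)
  rcases h.2 _ _ inf_le_left (hfle n) hfit.symm with hker | him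
  · right
    refine ⟨n, fun m hm => ?_⟩
    rw [← hker] at hm
    simpa using hm.2
  · left
    intro m hm
    rw [← him] at hm
    obtain ⟨m', hm', he⟩ := hm
    refine ⟨x ^ n0 • m', N.smul_mem _ hm', ?_⟩
    simp only [LinearMap.lsmul_apply] at he
    rw [← mul_smul, ← pow_succ', ← hn, he]

open Classical in
lemma prune (T : Ideal R → Submodule R A) (t : Finset (Ideal R)) (ht : t.sup T = ⊤) :
    ∃ u ⊆ t, u.sup T = ⊤ ∧ ∀ q ∈ u, (u.erase q).sup T ≠ ⊤ := by
  induction t using Finset.strongInductionOn with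
  | _ t ih =>
    by_cases h : ∀ q ∈ t, (t.erase q).sup T ≠ ⊤
    · exact ⟨t, Finset.Subset.refl t, ht, h⟩
    · push_neg at h
      obtain ⟨q, hq, htop⟩ := h
      obtain ⟨u, hu, h1, h2⟩ := ih (t.erase q) (Finset.erase_ssubset hq) htop
      exact ⟨u, hu.trans (Finset.erase_subset q t), h1, h2⟩

lemma sec_finsetSup (s : Finset (Submodule R A)) (hs : s.Nonempty) (q : Ideal R)
    (h : ∀ N ∈ s, Sec N ∧ N.annihilator.radical = q) :
    Sec (s.sup id) ∧ (s.sup id).annihilator.radical = q := by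
  induction hs using Finset.Nonempty.cons_induction with
  | singleton a => simpa using h a (by simp)
  | cons a s ha hs ih =>
    have hih := ih (fun N hN => h N (Finset.mem_cons_of_mem hN))
    have hA := h a (Finset.mem_cons_self a s)
    have := sec_sup hA.1 hih.1 (hih.2.trans hA.2.symm)
    rw [Finset.sup_cons]
    exact ⟨this.1, this.2.trans hA.2⟩

end Aux2
section Exist
variable {R : Type*} [CommRing R] {A : Type*} [AddCommGroup A] [Module R A]

open Classical in
lemma exists_rep [IsArtinian R A] [Nontrivial A] : Nonempty (MinimalSecondaryRep R A) := by
  obtain ⟨s0, hirr, hsup0⟩ := exists_irr_decomp (⊤ : Submodule R A)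
  set rad : Submodule R A → Ideal R := fun S => S.annihilator.radical with hrad
  set T : Ideal R → Submodule R A := fun q => (s0.filter (fun S => rad S = q)).sup id with hT
  set P : Finset (Ideal R) := s0.image rad with hP
  have hTq : ∀ q ∈ P, Sec (T q) ∧ (T q).annihilator.radical = q := by
    intro q hq
    obtain ⟨S, hS, hradS⟩ := Finset.mem_image.mp hq
    apply sec_finsetSup _ ⟨S, Finset.mem_filter.mpr ⟨hS, hradS⟩⟩
    intro N hN
    obtain ⟨hN0, hNr⟩ := Finset.mem_filter.mp hN
    exact ⟨sumIrr_sec (hirr N hN0), hNr⟩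
  have hPsup : P.sup T = ⊤ := by
    apply le_antisymm le_top
    rw [← hsup0]
    apply Finset.sup_le
    intro S hS
    have h1 : id S ≤ T (rad S) := Finset.le_sup (Finset.mem_filter.mpr ⟨hS, rfl⟩)
    exact h1.trans (Finset.le_sup (Finset.mem_image_of_mem rad hS))
  obtain ⟨u, huP, husup, huirr⟩ := prune T P hPsup
  set e := u.equivFin with he
  have hmem : ∀ i : Fin u.card, ((e.symm i : { x // x ∈ u }) : Ideal R) ∈ u :=
    fun i => (e.symm i).2
  have hsec : ∀ i, Sec (T ((e.symm i : { x // x ∈ u }) : Ideal R)) ∧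
      (T ((e.symm i : { x // x ∈ u }) : Ideal R)).annihilator.radical
        = ((e.symm i : { x // x ∈ u }) : Ideal R) :=
    fun i => hTq _ (huP (hmem i))
  refine ⟨⟨u.card, fun i => T ((e.symm i : { x // x ∈ u }) : Ideal R),
    fun i => ((e.symm i : { x // x ∈ u }) : Ideal R), ?_, ?_, ?_, ?_, ?_, ?_⟩⟩
  · -- sum_eq
    have h1 : (⨆ i : Fin u.card, T ((e.symm i : { x // x ∈ u }) : Ideal R)) =
        ⨆ a : { x // x ∈ u }, T (a : Ideal R) :=
      e.symm.iSup_comp (g := fun a : { x // x ∈ u } => T (a : Ideal R))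
    rw [h1, ← husup, Finset.sup_eq_iSup, iSup_subtype]
  · intro i
    exact (sec_iff _).mpr (hsec i).1
  · intro i
    exact (hsec i).2
  · intro i
    have := sec_radical_isPrime (hsec i).1
    rwa [(hsec i).2] at this
  · -- irredundant
    intro i htop
    apply huirr _ (hmem i)
    apply le_antisymm le_top
    rw [← htop]
    refine iSup_le fun j => iSup_le fun hj => ?_
    refine Finset.le_sup (Finset.mem_erase.mpr ⟨?_, hmem j⟩)
    intro hcoe
    exact hj (e.symm.injective (Subtype.ext hcoe))
  · intro i j hij
    exact e.symm.injective (Subtype.ext hij)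

end Exist
/-- For a nonzero Artinian module  over a commutative Noetherian local ring ,
the minimal attached primes of  are exactly the minimal primes over ;
in particular . -/
theorem minimal_attachedPrimes_eq_minimalPrimes
    (R : Type) [CommRing R] [IsNoetherianRing R] [IsLocalRing R]
    (A : Type) [AddCommGroup A] [Module R A] [IsArtinian R A] [Nontrivial A] :
    {p | p ∈ attachedPrimes R A ∧ ∀ q ∈ attachedPrimes R A, q ≤ p → q = p} =
      (Module.annihilator R A).minimalPrimes ∧
    ringKrullDim (R ⧸ Module.annihilator R A) =
      ⨆ p ∈ attachedPrimes R A, ringKrullDim (R ⧸ p) := by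
  classical
  obtain ⟨rep⟩ := exists_rep (R := R) (A := A)
  set I := Module.annihilator R A with hI
  have hIle : ∀ p ∈ attachedPrimes R A, I ≤ p := by
    rintro p ⟨rep', i, rfl⟩
    intro x hx
    rw [← rep'.rad_eq i]
    apply Ideal.le_radical
    exact Module.mem_annihilator.mpr fun m => Subtype.ext (by simpa using Module.mem_annihilator.mp hx (m : A))
  have hprime : ∀ p ∈ attachedPrimes R A, p.IsPrime := by
    rintro p ⟨rep', i, rfl⟩; exact rep'.isPrime i
  have hmin_mem : ∀ q ∈ I.minimalPrimes, q ∈ attachedPrimes R A := by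
    intro q hq
    have hqp : q.IsPrime := hq.1.1
    have hIq : I ≤ q := hq.1.2
    have hinf : (Finset.univ.inf rep.p) ≤ q := by
      intro x hx
      have hx' : ∀ i, x ∈ (rep.comp i).annihilator.radical := fun i => by
        rw [show (rep.comp i).annihilator.radical = rep.p i from rep.rad_eq i]
        have hle := Finset.inf_le (f := rep.p) (Finset.mem_univ i)
        exact hle hx
      choose k hk using fun i => (mem_rad_iff (rep.comp i) x).mp (hx' i)
      set Nk := Finset.univ.sup k with hNk
      have hkill : x ^ Nk ∈ I := by
        rw [hI, Module.mem_annihilator]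
        intro m
        have hm : m ∈ (⨆ i, rep.comp i) := by rw [rep.sum_eq]; trivial
        refine Submodule.iSup_induction (motive := fun m => x ^ Nk • m = 0) _ hm ?_ (by simp) ?_
        · intro i m hm
          have hki : k i ≤ Nk := Finset.le_sup (Finset.mem_univ i)
          have hpow : x ^ Nk = x ^ (Nk - k i) * x ^ (k i) := by
            rw [← pow_add, Nat.sub_add_cancel hki]
          rw [hpow, mul_smul, hk i m hm, smul_zero]
        · intro a b ha hb; rw [smul_add, ha, hb, add_zero]
      exact hqp.mem_of_pow_mem Nk (hIq hkill)
    obtain ⟨i, -, hi⟩ := (hqp.inf_le').mp hinf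
    have hpi : rep.p i ∈ attachedPrimes R A := ⟨rep, i, rfl⟩
    have : rep.p i = q :=
      le_antisymm hi (hq.2 ⟨rep.isPrime i, hIle (rep.p i) hpi⟩ hi)
    exact this ▸ hpi
  have hset : {p | p ∈ attachedPrimes R A ∧ ∀ q ∈ attachedPrimes R A, q ≤ p → q = p} =
      I.minimalPrimes := by
    ext p
    constructor
    · rintro ⟨hp, hmin⟩
      haveI := hprime p hp
      obtain ⟨q, hq, hle⟩ := Ideal.exists_minimalPrimes_le (hIle p hp)
      have : q = p := hmin q (hmin_mem q hq) hle
      exact this ▸ hq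
    · intro hq
      refine ⟨hmin_mem p hq, fun q hq' hle => ?_⟩
      exact le_antisymm hle (hq.2 ⟨hprime q hq', hIle q hq'⟩ hle)
  refine ⟨hset, le_antisymm ?_ ?_⟩
  · -- dim R/I ≤ sup
    show (⨆ c : LTSeries (PrimeSpectrum (R ⧸ I)), (c.length : WithBot ℕ∞)) ≤ _
    refine iSup_le fun c => ?_
    set mkI := Ideal.Quotient.mk I with hmkI
    set P : Fin (c.length + 1) → Ideal R := fun i => (c i).asIdeal.comap mkI with hPdef
    have hPprime : ∀ i, (P i).IsPrime := fun i => Ideal.IsPrime.comap mkI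
    have hPI : ∀ i, I ≤ P i := by
      intro i x hx
      show mkI x ∈ (c i).asIdeal
      rw [hmkI, Ideal.Quotient.eq_zero_iff_mem.mpr hx]
      exact zero_mem _
    have hPmono : StrictMono P := by
      intro i j hij
      refine lt_of_le_of_ne (Ideal.comap_mono (c.strictMono hij).le) fun heq => ?_
      exact (c.strictMono hij).ne (PrimeSpectrum.ext
        (Ideal.comap_injective_of_surjective mkI Ideal.Quotient.mk_surjective heq))
    haveI := hPprime 0
    obtain ⟨q, hqmin, hq0⟩ := Ideal.exists_minimalPrimes_le (hPI 0)
    haveI hqp : q.IsPrime := hqmin.1.1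
    set mkq := Ideal.Quotient.mk q with hmkq
    have hqP : ∀ i, q ≤ P i := fun i => hq0.trans (hPmono.monotone (Fin.zero_le i))
    have hQprime : ∀ i, ((P i).map mkq).IsPrime := fun i =>
      Ideal.map_isPrime_of_surjective Ideal.Quotient.mk_surjective
        (by rw [Ideal.mk_ker]; exact hqP i)
    have hQmono : ∀ i j : Fin (c.length + 1), i < j → (P i).map mkq < (P j).map mkq := by
      intro i j hij
      refine lt_of_le_of_ne (Ideal.map_mono (hPmono hij).le) fun heq => ?_
      have hcm : ∀ l : Fin (c.length + 1), ((P l).map mkq).comap mkq = P l := by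
        intro l
        rw [Ideal.comap_map_of_surjective mkq Ideal.Quotient.mk_surjective]
        rw [show Ideal.comap mkq ⊥ = q from Ideal.mk_ker]
        exact sup_eq_left.mpr (hqP l)
      have : P i = P j := by rw [← hcm i, ← hcm j, heq]
      exact (hPmono hij).ne this
    set d : LTSeries (PrimeSpectrum (R ⧸ q)) :=
      ⟨c.length, fun i => ⟨(P i).map mkq, hQprime i⟩,
        fun i => hQmono _ _ (Fin.castSucc_lt_succ (i := i))⟩ with hd
    have hlen : (c.length : WithBot ℕ∞) = (d.length : WithBot ℕ∞) := rfl
    rw [hlen]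
    have h1 : (d.length : WithBot ℕ∞) ≤ ringKrullDim (R ⧸ q) := Order.LTSeries.length_le_krullDim d
    refine h1.trans ?_
    exact le_iSup₂ (f := fun p (_ : p ∈ attachedPrimes R A) => ringKrullDim (R ⧸ p)) q
      (hmin_mem q hqmin)
  · -- sup ≤ dim R/I
    refine iSup₂_le fun p hp => ?_
    refine ringKrullDim_le_of_surjective (Ideal.Quotient.factor (hIle p hp)) ?_
    intro y
    obtain ⟨x, rfl⟩ := Ideal.Quotient.mk_surjective y
    exact ⟨Ideal.Quotient.mk I x, Ideal.Quotient.factor_mk (hIle p hp) x⟩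
end

section
/- Let (R, m) be a commutative Noetherian local ring with m-adic completion R̂, and let A be an Artinian R-module, viewed also as an Artinian R̂-module via its natural R̂-module structure. Then Att_R A = { P ∩ R : P ∈ Att_{R̂} A }. -/
section Basic
variable {S : Type*} [CommRing S] {M M₂ : Type*} [AddCommGroup M] [Module S M]
  [AddCommGroup M₂] [Module S M₂]

/-- Secondary with a prescribed radical annihilator. -/
def IsSecondaryWith (S : Type*) [CommRing S] (M : Type*) [AddCommGroup M] [Module S M]
    (q : Ideal S) : Prop :=
  IsSecondary S M ∧ (Module.annihilator S M).radical = q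

lemma mem_radAnn_iff {x : S} :
    x ∈ (Module.annihilator S M).radical ↔ ∃ n : ℕ, ∀ m : M, x ^ n • m = 0 := by
  simp [Ideal.mem_radical_iff, Module.mem_annihilator]

lemma IsSecondary.surj_of_not_mem (h : IsSecondary S M) {x : S}
    (hx : x ∉ (Module.annihilator S M).radical) :
    Function.Surjective (fun m : M => x • m) := by
  rcases h.2 x with hs | hn
  · exact hs
  · exact absurd (mem_radAnn_iff.mpr hn) hx

lemma surj_smul_pow {x : S} (h : Function.Surjective (fun m : M => x • m)) (n : ℕ) :
    Function.Surjective (fun m : M => x ^ n • m) := by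
  induction n with
  | zero => intro m; exact ⟨m, by simp⟩
  | succ k ih =>
      intro m
      obtain ⟨m', hm'⟩ := h m
      obtain ⟨m'', hm''⟩ := ih m'
      simp only at hm' hm''
      refine ⟨m'', ?_⟩
      calc x ^ (k + 1) • m'' = x • x ^ k • m'' := by rw [pow_succ', mul_smul]
      _ = m := by rw [hm'', hm']

lemma IsSecondary.not_surj_and_zero (h : IsSecondary S M) {f : M → M}
    (hf : Function.Surjective f) (hz : ∀ m, f m = 0) : False := by
  obtain ⟨a, b, hab⟩ := h.1
  obtain ⟨a', ha'⟩ := hf a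
  obtain ⟨b', hb'⟩ := hf b
  exact hab (by rw [← ha', ← hb', hz a', hz b'])

lemma IsSecondary.radical_isPrime (h : IsSecondary S M) :
    (Module.annihilator S M).radical.IsPrime := by
  constructor
  · intro htop
    have h1 : (1 : S) ∈ (Module.annihilator S M).radical := htop ▸ Submodule.mem_top
    obtain ⟨n, hn⟩ := mem_radAnn_iff.mp h1
    obtain ⟨a, b, hab⟩ := h.1
    exact hab (by have := hn a; have := hn b; simp_all)
  · intro x y hxy
    by_contra hc
    push_neg at hc
    obtain ⟨hx, hy⟩ := hc
    have hxs := h.surj_of_not_mem hx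
    have hys := h.surj_of_not_mem hy
    obtain ⟨n, hn⟩ := mem_radAnn_iff.mp hxy
    have hsurj : Function.Surjective (fun m : M => (x * y) ^ n • m) := by
      apply surj_smul_pow
      intro m
      obtain ⟨m', hm'⟩ := hxs m
      obtain ⟨m'', hm''⟩ := hys m'
      exact ⟨m'', by simp only [mul_smul] at *; rw [hm'', hm']⟩
    exact h.not_surj_and_zero hsurj hn

lemma IsSecondaryWith.isPrime {q : Ideal S} (h : IsSecondaryWith S M q) : q.IsPrime :=
  h.2 ▸ h.1.radical_isPrime

lemma IsSecondaryWith.surj_pow_of_not_mem {q : Ideal S} (h : IsSecondaryWith S M q) {x : S}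
    (hx : x ∉ q) (n : ℕ) : Function.Surjective (fun m : M => x ^ n • m) :=
  surj_smul_pow (h.1.surj_of_not_mem (h.2 ▸ hx)) n

/-- Image of a secondary module under a surjection onto a nontrivial module. -/
lemma IsSecondaryWith.map {q : Ideal S} (h : IsSecondaryWith S M q) (f : M →ₗ[S] M₂)
    (hf : Function.Surjective f) (hnt : Nontrivial M₂) : IsSecondaryWith S M₂ q := by
  have hsec : IsSecondary S M₂ := by
    refine ⟨hnt, fun x => ?_⟩
    rcases h.1.2 x with hs | ⟨n, hn⟩
    · left
      intro m₂
      obtain ⟨m, rfl⟩ := hf m₂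
      obtain ⟨m', hm'⟩ := hs m
      exact ⟨f m', by simp only at hm' ⊢; rw [← map_smul, hm']⟩
    · right
      refine ⟨n, fun m₂ => ?_⟩
      obtain ⟨m, rfl⟩ := hf m₂
      rw [← map_smul, hn, map_zero]
  refine ⟨hsec, le_antisymm ?_ ?_⟩
  · intro x hx
    by_contra hxq
    obtain ⟨n, hn⟩ := mem_radAnn_iff.mp hx
    have hsurj : Function.Surjective (fun m₂ : M₂ => x ^ n • m₂) := by
      intro m₂
      obtain ⟨m, rfl⟩ := hf m₂
      obtain ⟨m', hm'⟩ := h.surj_pow_of_not_mem hxq n m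
      exact ⟨f m', by simp only at hm' ⊢; rw [← map_smul, hm']⟩
    exact hsec.not_surj_and_zero hsurj hn
  · rw [← h.2]
    exact Ideal.radical_mono (f.annihilator_le_of_surjective hf)

end Basic

section Sub
variable {S : Type*} [CommRing S] {M : Type*} [AddCommGroup M] [Module S M]

lemma surj_on_submodule {N : Submodule S M} {x : S} :
    Function.Surjective (fun m : N => x • m) ↔ ∀ m ∈ N, ∃ m' ∈ N, x • m' = m := by
  constructor
  · intro h m hm
    obtain ⟨⟨m', hm'⟩, he⟩ := h ⟨m, hm⟩
    exact ⟨m', hm', congrArg Subtype.val he⟩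
  · rintro h ⟨m, hm⟩
    obtain ⟨m', hm', he⟩ := h m hm
    exact ⟨⟨m', hm'⟩, Subtype.ext he⟩

lemma nilp_on_submodule {N : Submodule S M} {x : S} {n : ℕ} :
    (∀ m : N, x ^ n • m = 0) ↔ ∀ m ∈ N, x ^ n • m = 0 := by
  constructor
  · intro h m hm
    exact congrArg Subtype.val (h ⟨m, hm⟩)
  · rintro h ⟨m, hm⟩
    exact Subtype.ext (h m hm)

lemma radical_finsetInf {ι : Type*} {s : Finset ι} (hs : s.Nonempty) (f : ι → Ideal S) :
    (s.inf f).radical = s.inf fun i => (f i).radical := by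
  induction hs using Finset.Nonempty.cons_induction with
  | singleton i => simp
  | cons i s hi hs ih => simp [Finset.inf_cons, Ideal.radical_inf, ih]

end Sub
section Sup
variable {S : Type*} [CommRing S] {M : Type*} [AddCommGroup M] [Module S M]

lemma mem_annihilator_biSup {ι : Type*} {s : Finset ι} {comp : ι → Submodule S M} {r : S} :
    r ∈ (⨆ i ∈ s, comp i).annihilator ↔ ∀ i ∈ s, r ∈ (comp i).annihilator := by
  simp only [Submodule.mem_annihilator]
  constructor
  · intro h i hi n hn
    exact h n (le_iSup₂ (f := fun i (_ : i ∈ s) => comp i) i hi hn)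
  · intro h n hn
    refine Submodule.iSup_induction (motive := fun m => r • m = 0)
      (fun i => ⨆ _ : i ∈ s, comp i) hn ?_ (smul_zero r) ?_
    · intro i m hm
      by_cases hi : i ∈ s
      · simp only [iSup_pos hi] at hm
        exact h i hi m hm
      · simp only [iSup_neg hi] at hm
        obtain rfl := Submodule.mem_bot S |>.mp hm
        exact smul_zero r
    · intro m₁ m₂ h₁ h₂
      rw [smul_add, h₁, h₂, add_zero]

lemma annihilator_biSup {ι : Type*} (s : Finset ι) (comp : ι → Submodule S M) :
    (⨆ i ∈ s, comp i).annihilator = s.inf fun i => (comp i).annihilator := by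
  ext r
  rw [mem_annihilator_biSup, Finset.inf_eq_iInf, Submodule.mem_iInf]
  simp only [Submodule.mem_iInf]

lemma isSecondaryWith_biSup {ι : Type*} {s : Finset ι} (hs : s.Nonempty)
    {comp : ι → Submodule S M} {q : Ideal S}
    (h : ∀ i ∈ s, IsSecondaryWith S ↥(comp i) q) :
    IsSecondaryWith S ↥(⨆ i ∈ s, comp i) q := by
  have hrad : ((⨆ i ∈ s, comp i).annihilator).radical = q := by
    rw [annihilator_biSup, radical_finsetInf hs]
    rw [Finset.inf_congr rfl fun i hi => (h i hi).2]
    exact Finset.inf_const hs q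
  obtain ⟨i₀, hi₀⟩ := hs
  have hnt : Nontrivial (⨆ i ∈ s, comp i : Submodule S M) := by
    rw [Submodule.nontrivial_iff_ne_bot]
    intro hbot
    have hle : comp i₀ ≤ ⊥ := hbot ▸ le_iSup₂ (f := fun i (_ : i ∈ s) => comp i) i₀ hi₀
    exact (Submodule.nontrivial_iff_ne_bot.mp (h i₀ hi₀).1.1) (le_bot_iff.mp hle)
  refine ⟨⟨hnt, fun x => ?_⟩, hrad⟩
  by_cases hx : x ∈ q
  · right
    rw [← hrad] at hx
    exact mem_radAnn_iff.mp hx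
  · left
    rw [surj_on_submodule]
    intro m hm
    refine Submodule.iSup_induction (motive := fun m => ∃ m' ∈ (⨆ i ∈ s, comp i : Submodule S M),
      x • m' = m) (fun i => ⨆ _ : i ∈ s, comp i) hm ?_ ⟨0, Submodule.zero_mem _, smul_zero x⟩ ?_
    · intro i m hmi
      by_cases hi : i ∈ s
      · simp only [iSup_pos hi] at hmi
        have hsurj := (h i hi).1.surj_of_not_mem (x := x) (by rw [(h i hi).2]; exact hx)
        rw [surj_on_submodule] at hsurj
        obtain ⟨m', hm', he⟩ := hsurj m hmi
        exact ⟨m', le_iSup₂ (f := fun i (_ : i ∈ s) => comp i) i hi hm', he⟩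
      · simp only [iSup_neg hi] at hmi
        obtain rfl := Submodule.mem_bot S |>.mp hmi
        exact ⟨0, Submodule.zero_mem _, smul_zero x⟩
    · rintro m₁ m₂ ⟨a, ha, rfl⟩ ⟨b, hb, rfl⟩
      exact ⟨a + b, Submodule.add_mem _ ha hb, smul_add x a b⟩

end Sup
section Rep
variable {S : Type*} [CommRing S] {M : Type*} [AddCommGroup M] [Module S M]

lemma exists_rep_of_finset_irr [DecidableEq (Ideal S)] (t : Finset (Ideal S)) (c : Ideal S → Submodule S M)
    (hsec : ∀ J ∈ t, IsSecondaryWith S ↥(c J) J)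
    (hsum : (⨆ J ∈ t, c J) = ⊤)
    (hirr : ∀ J ∈ t, (⨆ K ∈ t.erase J, c K) ≠ ⊤) :
    ∃ rep : MinimalSecondaryRep S M, Set.range rep.p = ↑t := by
  classical
  let e : Fin t.card ≃ {x // x ∈ t} := (Fintype.equivFinOfCardEq (Fintype.card_coe t)).symm
  have hmem : ∀ i, (↑(e i) : Ideal S) ∈ t := fun i => (e i).2
  refine ⟨⟨t.card, fun i => c ↑(e i), fun i => ↑(e i), ?_, ?_, ?_, ?_, ?_, ?_⟩, ?_⟩
  · rw [iSup_subtype'] at hsum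
    rw [Equiv.iSup_comp (g := fun J : {x // x ∈ t} => c ↑J) e]
    exact hsum
  · exact fun i => (hsec _ (hmem i)).1
  · exact fun i => (hsec _ (hmem i)).2
  · exact fun i => (hsec _ (hmem i)).isPrime
  · intro i htop
    refine hirr ↑(e i) (hmem i) (top_unique ?_)
    rw [← htop]
    refine iSup₂_le fun j hj => ?_
    have hne : (↑(e j) : Ideal S) ≠ ↑(e i) := by
      intro hval
      exact hj (e.injective (Subtype.ext hval))
    exact le_iSup₂ (f := fun K (_ : K ∈ t.erase ↑(e i)) => c K) _
      (Finset.mem_erase.mpr ⟨hne, hmem j⟩)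
  · intro i j hij
    exact e.injective (Subtype.ext hij)
  · ext J
    constructor
    · rintro ⟨i, rfl⟩
      exact hmem i
    · intro hJ
      exact ⟨e.symm ⟨J, hJ⟩, by simp⟩

lemma exists_rep_of_finset [DecidableEq (Ideal S)] (t : Finset (Ideal S)) :
    ∀ c : Ideal S → Submodule S M, (∀ J ∈ t, IsSecondaryWith S ↥(c J) J) →
      (⨆ J ∈ t, c J) = ⊤ → Nonempty (MinimalSecondaryRep S M) := by
  classical
  induction t using Finset.strongInduction with
  | _ t ih =>
    intro c hsec hsum
    by_cases h : ∃ J ∈ t, (⨆ K ∈ t.erase J, c K) = ⊤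
    · obtain ⟨J, hJ, htop⟩ := h
      exact ih (t.erase J) (Finset.erase_ssubset hJ) c
        (fun K hK => hsec K (Finset.mem_of_mem_erase hK)) htop
    · push_neg at h
      obtain ⟨rep, -⟩ := exists_rep_of_finset_irr t c hsec hsum h
      exact ⟨rep⟩

end Rep
section Merge
variable {S : Type*} [CommRing S] {M : Type*} [AddCommGroup M] [Module S M]
variable [DecidableEq (Ideal S)]

lemma comp_le_c {n : ℕ} (comp : Fin n → Submodule S M) (q : Fin n → Ideal S) (i : Fin n) :
    comp i ≤ ⨆ j ∈ Finset.univ.filter (fun j => q j = q i), comp j :=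
  le_iSup₂ (f := fun j (_ : j ∈ Finset.univ.filter (fun j => q j = q i)) => comp j) i
    (Finset.mem_filter.mpr ⟨Finset.mem_univ i, rfl⟩)

lemma merge_aux {n : ℕ} {comp : Fin n → Submodule S M} {q : Fin n → Ideal S}
    (hsec : ∀ i, IsSecondaryWith S ↥(comp i) (q i)) :
    ∀ J ∈ Finset.image q Finset.univ,
        IsSecondaryWith S
          ↥(⨆ i ∈ Finset.univ.filter (fun i => q i = J), comp i) J := by
  intro J hJ
  obtain ⟨i₀, -, rfl⟩ := Finset.mem_image.mp hJ
  have hne : (Finset.univ.filter (fun i => q i = q i₀)).Nonempty :=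
    ⟨i₀, Finset.mem_filter.mpr ⟨Finset.mem_univ i₀, rfl⟩⟩
  refine isSecondaryWith_biSup hne ?_
  intro i hi
  have hq : q i = q i₀ := (Finset.mem_filter.mp hi).2
  rw [← hq]
  exact hsec i

lemma merge_sum {n : ℕ} {comp : Fin n → Submodule S M} {q : Fin n → Ideal S}
    (hsum : (⨆ i, comp i) = ⊤) :
    (⨆ J ∈ Finset.image q Finset.univ,
      (⨆ i ∈ Finset.univ.filter (fun i => q i = J), comp i)) = ⊤ := by
  rw [eq_top_iff, ← hsum]
  refine iSup_le fun i => ?_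
  refine le_trans (comp_le_c comp q i) ?_
  exact le_iSup₂ (f := fun J (_ : J ∈ Finset.image q Finset.univ) =>
      ⨆ j ∈ Finset.univ.filter (fun j => q j = J), comp j) (q i)
    (Finset.mem_image.mpr ⟨i, Finset.mem_univ i, rfl⟩)

/-- Merging components with equal attached primes in an irredundant family. -/
lemma merge {n : ℕ} {comp : Fin n → Submodule S M} {q : Fin n → Ideal S}
    (hsec : ∀ i, IsSecondaryWith S ↥(comp i) (q i))
    (hsum : (⨆ i, comp i) = ⊤)
    (hirr : ∀ i, (⨆ j ∈ ({i}ᶜ : Set (Fin n)), comp j) ≠ ⊤) :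
    ∃ rep : MinimalSecondaryRep S M, Set.range rep.p = Set.range q := by
  classical
  have hirr' : ∀ J ∈ Finset.image q Finset.univ,
      (⨆ K ∈ (Finset.image q Finset.univ).erase J,
        ⨆ i ∈ Finset.univ.filter (fun i => q i = K), comp i) ≠ ⊤ := by
    intro J hJ htop
    obtain ⟨i₀, -, rfl⟩ := Finset.mem_image.mp hJ
    refine hirr i₀ (top_unique ?_)
    rw [← htop]
    refine iSup₂_le fun K hK => iSup₂_le fun i hi => ?_
    have hqi : q i = K := (Finset.mem_filter.mp hi).2
    have hne : i ≠ i₀ := by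
      rintro rfl
      exact (Finset.mem_erase.mp hK).1 hqi.symm
    exact le_iSup₂ (f := fun j (_ : j ∈ ({i₀}ᶜ : Set (Fin n))) => comp j) i hne
  obtain ⟨rep, hrange⟩ := exists_rep_of_finset_irr (Finset.image q Finset.univ)
    (fun J => ⨆ i ∈ Finset.univ.filter (fun i => q i = J), comp i)
    (merge_aux hsec) (merge_sum hsum) hirr'
  refine ⟨rep, ?_⟩
  rw [hrange]
  simp only [Finset.coe_image, Finset.coe_univ, Set.image_univ]

/-- From any finite secondary family summing to the whole module, a minimal
secondary representation exists. -/
lemma merge_weak {n : ℕ} {comp : Fin n → Submodule S M} {q : Fin n → Ideal S}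
    (hsec : ∀ i, IsSecondaryWith S ↥(comp i) (q i))
    (hsum : (⨆ i, comp i) = ⊤) :
    Nonempty (MinimalSecondaryRep S M) := by
  classical
  exact exists_rep_of_finset (Finset.image q Finset.univ)
    (fun J => ⨆ i ∈ Finset.univ.filter (fun i => q i = J), comp i)
    (merge_aux hsec) (merge_sum hsum)

end Merge
section Exist
variable {S : Type*} [CommRing S] {M : Type*} [AddCommGroup M] [Module S M]

/-- A nonzero sum-irreducible submodule of an Artinian module is secondary. -/
lemma isSecondary_of_irreducible [IsArtinian S M] {N : Submodule S M} (hbot : N ≠ ⊥)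
    (hred : ∀ N₁ N₂ : Submodule S M, N₁ < N → N₂ < N → N₁ ⊔ N₂ ≠ N) :
    IsSecondary S ↥N := by
  refine ⟨Submodule.nontrivial_iff_ne_bot.mpr hbot, fun x => ?_⟩
  set ψ : ℕ → (M →ₗ[S] M) := fun k => LinearMap.lsmul S M (x ^ k) with hψ
  have hψap : ∀ (k : ℕ) (m : M), ψ k m = x ^ k • m := fun k m => rfl
  have hanti : ∀ k, N.map (ψ (k + 1)) ≤ N.map (ψ k) := by
    intro k y hy
    obtain ⟨m, hm, rfl⟩ := Submodule.mem_map.mp hy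
    refine Submodule.mem_map.mpr ⟨x • m, N.smul_mem x hm, ?_⟩
    simp only [hψap, smul_smul, ← pow_succ]
  have hmono : Monotone (fun k => OrderDual.toDual (N.map (ψ k))) :=
    (antitone_nat_of_succ_le hanti).dual_right
  obtain ⟨k₀, hk₀⟩ := IsArtinian.monotone_stabilizes ⟨_, hmono⟩
  set k := k₀ + 1 with hk
  have heq : N.map (ψ k) = N.map (ψ (2 * k)) := by
    have e1 := hk₀ k (Nat.le_succ k₀)
    have e2 := hk₀ (2 * k) (by omega)
    exact (congrArg OrderDual.ofDual e1).symm.trans (congrArg OrderDual.ofDual e2)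
  have hmaple : N.map (ψ k) ≤ N := by
    intro y hy
    obtain ⟨m, hm, rfl⟩ := Submodule.mem_map.mp hy
    exact N.smul_mem _ hm
  have hdecomp : N.map (ψ k) ⊔ (N ⊓ LinearMap.ker (ψ k)) = N := by
    refine le_antisymm (sup_le hmaple inf_le_left) ?_
    intro m hm
    have h1 : ψ k m ∈ N.map (ψ (2 * k)) := heq ▸ Submodule.mem_map_of_mem hm
    obtain ⟨m', hm', he⟩ := Submodule.mem_map.mp h1
    have he' : ψ k (ψ k m') = ψ k m := by
      rw [← he]
      simp only [hψap, smul_smul, ← pow_add, two_mul]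
    have hsplit : m = ψ k m' + (m - ψ k m') := by abel
    rw [hsplit]
    refine Submodule.add_mem_sup (Submodule.mem_map_of_mem hm') ?_
    refine Submodule.mem_inf.mpr ⟨N.sub_mem hm (hmaple (Submodule.mem_map_of_mem hm')), ?_⟩
    rw [LinearMap.mem_ker, map_sub, he', sub_self]
  by_cases hcase : N.map (ψ k) = N
  · left
    rw [surj_on_submodule]
    intro m hm
    obtain ⟨m', hm', he⟩ := Submodule.mem_map.mp (hcase ▸ hm)
    refine ⟨x ^ k₀ • m', N.smul_mem _ hm', ?_⟩
    rw [← he, hψap, smul_smul, ← pow_succ']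
  · right
    refine ⟨k, ?_⟩
    rw [nilp_on_submodule]
    have hker : N ⊓ LinearMap.ker (ψ k) = N := by
      by_contra hker
      have h1 : N.map (ψ k) < N := lt_of_le_of_ne hmaple hcase
      have h2 : N ⊓ LinearMap.ker (ψ k) < N := lt_of_le_of_ne inf_le_left hker
      exact hred _ _ h1 h2 hdecomp
    intro m hm
    have : m ∈ LinearMap.ker (ψ k) := (Submodule.mem_inf.mp (hker ▸ hm)).2
    exact LinearMap.mem_ker.mp this

lemma exists_secondary_finset [IsArtinian S M] (N : Submodule S M) :
    ∃ s : Finset (Submodule S M), (∀ P ∈ s, IsSecondary S ↥P) ∧ s.sup id = N := by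
  classical
  induction N using WellFoundedLT.induction with
  | _ N ih =>
    by_cases hbot : N = ⊥
    · exact ⟨∅, by simp, by simp [hbot]⟩
    by_cases hred : ∃ N₁ N₂ : Submodule S M, N₁ < N ∧ N₂ < N ∧ N₁ ⊔ N₂ = N
    · obtain ⟨N₁, N₂, h₁, h₂, hsup⟩ := hred
      obtain ⟨s₁, hs₁, he₁⟩ := ih N₁ h₁
      obtain ⟨s₂, hs₂, he₂⟩ := ih N₂ h₂
      refine ⟨s₁ ∪ s₂, ?_, ?_⟩
      · intro P hP
        rcases Finset.mem_union.mp hP with h | h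
        · exact hs₁ P h
        · exact hs₂ P h
      · rw [Finset.sup_union, he₁, he₂, hsup]
    · push_neg at hred
      refine ⟨{N}, ?_, Finset.sup_singleton⟩
      intro P hP
      rw [Finset.mem_singleton.mp hP]
      exact isSecondary_of_irreducible hbot fun N₁ N₂ h₁ h₂ => hred N₁ N₂ h₁ h₂

/-- Every Artinian module admits a minimal secondary representation. -/
lemma exists_minimalSecondaryRep_s5 [IsArtinian S M] :
    Nonempty (MinimalSecondaryRep S M) := by
  classical
  obtain ⟨s, hsec, hsup⟩ := exists_secondary_finset (⊤ : Submodule S M)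
  let e : Fin s.card ≃ {x // x ∈ s} := (Fintype.equivFinOfCardEq (Fintype.card_coe s)).symm
  refine merge_weak (comp := fun i => ↑(e i))
    (q := fun i => (Module.annihilator S ↥(↑(e i) : Submodule S M)).radical) ?_ ?_
  · exact fun i => ⟨hsec _ (e i).2, rfl⟩
  · rw [Equiv.iSup_comp (g := fun P : {x // x ∈ s} => (P : Submodule S M)) e]
    rw [Finset.sup_eq_iSup, iSup_subtype'] at hsup
    simpa using hsup

end Exist
section Unique
variable {S : Type*} [CommRing S] {M : Type*} [AddCommGroup M] [Module S M]

lemma quotient_secondary (rep : MinimalSecondaryRep S M) (i : Fin rep.n) :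
    IsSecondaryWith S (M ⧸ (⨆ j ∈ ({i}ᶜ : Set (Fin rep.n)), rep.comp j)) (rep.p i) := by
  set N := ⨆ j ∈ ({i}ᶜ : Set (Fin rep.n)), rep.comp j with hN
  have hnt : Nontrivial (M ⧸ N) :=
    Submodule.Quotient.nontrivial_iff.mpr (rep.irredundant i)
  have hsup : rep.comp i ⊔ N = ⊤ := by
    rw [eq_top_iff, ← rep.sum_eq]
    refine iSup_le fun j => ?_
    by_cases hj : j = i
    · rw [hj]; exact le_sup_left
    · exact le_trans (le_iSup₂ (f := fun j (_ : j ∈ ({i}ᶜ : Set (Fin rep.n))) => rep.comp j)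
        j hj) le_sup_right
  have hsurj : Function.Surjective (N.mkQ.comp (rep.comp i).subtype) := by
    intro y
    obtain ⟨m, rfl⟩ := N.mkQ_surjective y
    have hm : m ∈ rep.comp i ⊔ N := hsup ▸ Submodule.mem_top
    obtain ⟨a, ha, b, hb, rfl⟩ := Submodule.mem_sup.mp hm
    refine ⟨⟨a, ha⟩, ?_⟩
    simp only [LinearMap.comp_apply, Submodule.subtype_apply, Submodule.mkQ_apply]
    rw [show Submodule.Quotient.mk (a + b) = (Submodule.Quotient.mk a : M ⧸ N) +
      Submodule.Quotient.mk b from rfl, (Submodule.Quotient.mk_eq_zero N).mpr hb, add_zero]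
  exact IsSecondaryWith.map ⟨rep.secondary i, rep.rad_eq i⟩ _ hsurj hnt

lemma exists_eq_p_of_quotient (rep : MinimalSecondaryRep S M) {N : Submodule S M} {q : Ideal S}
    (hQ : IsSecondaryWith S (M ⧸ N) q) : ∃ i, rep.p i = q := by
  classical
  set T : Fin rep.n → Submodule S (M ⧸ N) := fun j => (rep.comp j).map N.mkQ with hT
  set s : Finset (Fin rep.n) := Finset.univ.filter fun j => T j ≠ ⊥ with hs
  have hTsup : (⨆ j, T j) = ⊤ := by
    rw [hT, ← Submodule.map_iSup, rep.sum_eq, Submodule.map_top, Submodule.range_mkQ]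
  have hbsup : (⨆ j ∈ s, T j) = ⊤ := by
    rw [eq_top_iff, ← hTsup]
    refine iSup_le fun j => ?_
    by_cases hj : T j = ⊥
    · rw [hj]; exact bot_le
    · exact le_iSup₂ (f := fun j (_ : j ∈ s) => T j) j
        (Finset.mem_filter.mpr ⟨Finset.mem_univ j, hj⟩)
  have hnt : Nontrivial (M ⧸ N) := hQ.1.1
  have hsne : s.Nonempty := by
    rw [Finset.nonempty_iff_ne_empty]
    intro hemp
    rw [hemp, show (⨆ j ∈ (∅ : Finset (Fin rep.n)), T j) = ⊥ by simp] at hbsup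
    exact bot_ne_top hbsup
  have hsecT : ∀ j ∈ s, IsSecondaryWith S ↥(T j) (rep.p j) := by
    intro j hj
    refine IsSecondaryWith.map ⟨rep.secondary j, rep.rad_eq j⟩
      (N.mkQ.submoduleMap (rep.comp j)) (N.mkQ.submoduleMap_surjective (rep.comp j)) ?_
    exact Submodule.nontrivial_iff_ne_bot.mpr (Finset.mem_filter.mp hj).2
  have hrad : q = s.inf rep.p := by
    rw [← hQ.2, ← Submodule.annihilator_top, ← hbsup, annihilator_biSup,
      radical_finsetInf hsne, Finset.inf_congr rfl fun j hj => (hsecT j hj).2]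
  have hqp : q.IsPrime := hQ.isPrime
  obtain ⟨j, hjs, hle⟩ := hqp.inf_le'.mp (le_of_eq hrad.symm)
  exact ⟨j, le_antisymm hle (by rw [hrad]; exact Finset.inf_le hjs)⟩

/-- First uniqueness theorem: the attached primes are those of any minimal
secondary representation. -/
theorem attachedPrimes_eq_range (rep : MinimalSecondaryRep S M) :
    attachedPrimes S M = Set.range rep.p := by
  ext q
  constructor
  · rintro ⟨rep', i', rfl⟩
    exact exists_eq_p_of_quotient rep (quotient_secondary rep' i')
  · rintro ⟨i, rfl⟩
    exact ⟨rep, i, rfl⟩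

end Unique
section Transfer
variable {R : Type*} [CommRing R] {Rh : Type*} [CommRing Rh] [Algebra R Rh]
  {A : Type*} [AddCommGroup A] [Module R A] [Module Rh A] [IsScalarTower R Rh A]

lemma annihilator_restrictScalars (N : Submodule Rh A) :
    Module.annihilator R ↥(N.restrictScalars R) =
      (Module.annihilator Rh ↥N).comap (algebraMap R Rh) := by
  ext r
  rw [Ideal.mem_comap, Submodule.mem_annihilator (N := N.restrictScalars R),
    Submodule.mem_annihilator (N := N)]
  simp only [Submodule.restrictScalars_mem, algebraMap_smul]

lemma isSecondaryWith_restrictScalars {N : Submodule Rh A} {P : Ideal Rh}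
    (h : IsSecondaryWith Rh ↥N P) :
    IsSecondaryWith R ↥(N.restrictScalars R) (P.comap (algebraMap R Rh)) := by
  constructor
  · constructor
    · rw [Submodule.nontrivial_iff_ne_bot]
      intro hbot
      refine Submodule.nontrivial_iff_ne_bot.mp h.1.1 ?_
      apply Submodule.restrictScalars_injective R Rh A
      rw [hbot]
      ext y
      simp
    · intro x
      rcases h.1.2 (algebraMap R Rh x) with hs | ⟨n, hn⟩
      · left
        rw [surj_on_submodule]
        rw [surj_on_submodule] at hs
        intro m hm
        obtain ⟨m', hm', he⟩ := hs m (Submodule.restrictScalars_mem R N m |>.mp hm)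
        rw [algebraMap_smul] at he
        exact ⟨m', (Submodule.restrictScalars_mem R N m').mpr hm', he⟩
      · right
        refine ⟨n, ?_⟩
        rw [nilp_on_submodule]
        rw [nilp_on_submodule] at hn
        intro m hm
        have := hn m ((Submodule.restrictScalars_mem R N m).mp hm)
        rwa [← map_pow, algebraMap_smul] at this
  · rw [annihilator_restrictScalars, ← Ideal.comap_radical, h.2]

lemma restrictScalars_iSup {ι : Sort*} (f : ι → Submodule Rh A) :
    (⨆ i, (f i).restrictScalars R) = (⨆ i, f i).restrictScalars R := by
  refine le_antisymm (iSup_le fun i => ?_) ?_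
  · intro x hx
    exact le_iSup f i ((Submodule.restrictScalars_mem R (f i) x).mp hx)
  · intro x hx
    have hx' : x ∈ ⨆ i, f i := hx
    refine Submodule.iSup_induction (motive := fun y => y ∈ ⨆ i, (f i).restrictScalars R) f hx' ?_
      (Submodule.zero_mem _) ?_
    · intro i y hy
      exact Submodule.mem_iSup_of_mem i ((Submodule.restrictScalars_mem R (f i) y).mpr hy)
    · intro a b ha hb
      exact Submodule.add_mem _ ha hb

end Transfer

/-- Attached primes behave well under completion: if `A` is an Artinian module over a
Noetherian local ring `R`, viewed as a module over the `𝔪`-adic completion `R̂` via its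
natural (compatible) `R̂`-module structure, then
`Att_R A = { P ∩ R : P ∈ Att_{R̂} A }`. -/
theorem attachedPrimes_eq_comap_attachedPrimes_completion
    (R : Type) [CommRing R] [IsNoetherianRing R] [IsLocalRing R]
    (A : Type) [AddCommGroup A] [Module R A] [IsArtinian R A]
    [Module (AdicCompletion (IsLocalRing.maximalIdeal R) R) A]
    [IsScalarTower R (AdicCompletion (IsLocalRing.maximalIdeal R) R) A] :
    attachedPrimes R A =
      (fun P => P.comap (algebraMap R (AdicCompletion (IsLocalRing.maximalIdeal R) R))) ''
        attachedPrimes (AdicCompletion (IsLocalRing.maximalIdeal R) R) A := by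
  classical
  set Rh := AdicCompletion (IsLocalRing.maximalIdeal R) R with hRh
  haveI : IsArtinian Rh A := isArtinian_of_tower R inferInstance
  obtain ⟨reph⟩ := exists_minimalSecondaryRep_s5 (S := Rh) (M := A)
  have hsec : ∀ i, IsSecondaryWith R ↥((reph.comp i).restrictScalars R)
      ((reph.p i).comap (algebraMap R Rh)) :=
    fun i => isSecondaryWith_restrictScalars ⟨reph.secondary i, reph.rad_eq i⟩
  have hsum : (⨆ i, (reph.comp i).restrictScalars R) = ⊤ := by
    rw [restrictScalars_iSup, reph.sum_eq]
    rfl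
  have hirr : ∀ i, (⨆ j ∈ ({i}ᶜ : Set (Fin reph.n)), (reph.comp j).restrictScalars R) ≠ ⊤ := by
    intro i htop
    refine reph.irredundant i (top_unique ?_)
    intro x hx
    have hx' : x ∈ (⨆ j ∈ ({i}ᶜ : Set (Fin reph.n)), (reph.comp j).restrictScalars R) :=
      htop ▸ Submodule.mem_top
    revert hx'
    refine fun hx' => ?_
    have hle : (⨆ j ∈ ({i}ᶜ : Set (Fin reph.n)), (reph.comp j).restrictScalars R) ≤
        ((⨆ j ∈ ({i}ᶜ : Set (Fin reph.n)), reph.comp j)).restrictScalars R := by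
      refine iSup₂_le fun j hj => ?_
      intro y hy
      exact le_iSup₂ (f := fun j (_ : j ∈ ({i}ᶜ : Set (Fin reph.n))) => reph.comp j) j hj
        ((Submodule.restrictScalars_mem R (reph.comp j) y).mp hy)
    exact hle hx'
  obtain ⟨repc, hrange⟩ := merge hsec hsum hirr
  rw [attachedPrimes_eq_range repc, attachedPrimes_eq_range reph, hrange,
    show (fun i => (reph.p i).comap (algebraMap R Rh)) =
      (fun P => P.comap (algebraMap R Rh)) ∘ reph.p from rfl,
    Set.range_comp]
end
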